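/- For any connected order ideal J of P, the subgraph χ_J of G_P induced by the vertex set {Λ_i^P : i ∈ gs(J)}, where gs(J) is the set of maximal elements of J with respect to ≤_P, is a connected graph. -/

import Mathlib

attribute [local instance] Classical.propDecidable

noncomputable section

open Finset

variable {n : ℕ}

/-- The comparability graph of the poset structure `P` on `Fin n`; for an order
ideal of `P`, connectivity of its induced subgraph in this graph agrees with
connectivity of the Hasse diagram. -/
def compGraph (P : PartialOrder (Fin n)) : SimpleGraph (Fin n) where
  Adj i j := i ≠ j ∧ (P.le i j ∨ P.le j i)
  symm := by
    refine ⟨fun i j h => ?_⟩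
    exact ⟨h.1.symm, h.2.symm⟩
  loopless := by
    refine ⟨fun i h => ?_⟩
    exact h.1 rfl

/-- `J` is an order ideal of the poset `P`. -/
def IsIdeal (P : PartialOrder (Fin n)) (J : Finset (Fin n)) : Prop :=
  ∀ i ∈ J, ∀ j : Fin n, P.le j i → j ∈ J

/-- The Hasse diagram of `J` as a subposet of `P` is a connected graph. -/
def JConn (P : PartialOrder (Fin n)) (J : Finset (Fin n)) : Prop :=
  ((compGraph P).induce (↑J : Set (Fin n))).Connected

/-- `J` is a connected order ideal of `P`. -/
def IsConnIdeal (P : PartialOrder (Fin n)) (J : Finset (Fin n)) : Prop :=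
  IsIdeal P J ∧ JConn P J

/-- The type of connected order ideals of `P` (the vertices of `G_P`). -/
abbrev ConnIdeal (P : PartialOrder (Fin n)) : Type :=
  {J : Finset (Fin n) // IsConnIdeal P J}

instance (P : PartialOrder (Fin n)) : Fintype (ConnIdeal P) := Fintype.ofFinite _

/-- `A` and `B` intersect nontrivially. -/
def Nontriv (A B : Finset (Fin n)) : Prop :=
  (A ∩ B).Nonempty ∧ ¬ A ⊆ B ∧ ¬ B ⊆ A

/-- The graph `G_P` on the connected order ideals of `P`, with two ideals
adjacent iff they intersect nontrivially. -/
def GP (P : PartialOrder (Fin n)) : SimpleGraph (ConnIdeal P) where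
  Adj A B := Nontriv A.1 B.1
  symm := by
    refine ⟨fun A B h => ?_⟩
    exact ⟨by rw [Finset.inter_comm]; exact h.1, h.2.2, h.2.1⟩
  loopless := by
    refine ⟨fun A h => ?_⟩
    exact h.2.1 (Finset.Subset.refl _)

instance (P : PartialOrder (Fin n)) : Fintype ((GP P).ConnectedComponent) :=
  Fintype.ofFinite _

instance (P : PartialOrder (Fin n)) : Fintype ((GP P).edgeSet) :=
  Fintype.ofFinite _

/-- `s` is an independent set of the graph `G`. -/
def IsIndep {V : Type*} (G : SimpleGraph V) (s : Finset V) : Prop :=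
  ∀ a ∈ s, ∀ b ∈ s, ¬ G.Adj a b

/-- `s` is a maximum independent set of the graph `G`. -/
def IsMaxIndep {V : Type*} (G : SimpleGraph V) (s : Finset V) : Prop :=
  IsIndep G s ∧ ∀ t : Finset V, IsIndep G t → t.card ≤ s.card

/-- `s` is a maximum independent set of the subgraph of `G` induced on the
vertex set `S` (e.g. on a connected component of `G`). -/
def IsMaxIndepOn {V : Type*} (G : SimpleGraph V) (S : Set V) (s : Finset V) : Prop :=
  ↑s ⊆ S ∧ IsIndep G s ∧ ∀ t : Finset V, ↑t ⊆ S → IsIndep G t → t.card ≤ s.card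

/-- `μ(M, J) = ⋃_{J' ∈ M, J' ⊊ J} J'`. -/
def mu (P : PartialOrder (Fin n)) (M : Finset (ConnIdeal P)) (J : Finset (Fin n)) :
    Finset (Fin n) :=
  (M.filter (fun J' => J'.1 ⊂ J)).biUnion (fun J' => J'.1)

/-- The strict order relation of the poset `F_M` associated with a maximum
independent set `M` of `G_P`: `i <_{F_M} j` iff `J_a ⊊ J_b` where `J_a, J_b ∈ M`
satisfy `J_a \ μ(M,J_a) = {i}` and `J_b \ μ(M,J_b) = {j}`. -/
def FMlt (P : PartialOrder (Fin n)) (M : Finset (ConnIdeal P)) (i j : Fin n) : Prop :=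
  ∃ Ja ∈ M, ∃ Jb ∈ M,
    Ja.1 \ mu P M Ja.1 = {i} ∧ Jb.1 \ mu P M Jb.1 = {j} ∧ Ja.1 ⊂ Jb.1

/-- The order relation of the poset `F_M`. -/
def FMle (P : PartialOrder (Fin n)) (M : Finset (ConnIdeal P)) (i j : Fin n) : Prop :=
  i = j ∨ FMlt P M i j

/-- Strict relation associated with the relation `le`. -/
def ltRel (le : Fin n → Fin n → Prop) (i j : Fin n) : Prop := le i j ∧ i ≠ j

/-- `j` covers `i` in the order given by the relation `le`. -/
def CovRel (le : Fin n → Fin n → Prop) (i j : Fin n) : Prop :=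
  ltRel le i j ∧ ∀ k : Fin n, ltRel le i k → ¬ ltRel le k j

/-- The principal order ideal `Λ_i = {j : j ≤ i}` of the order given by `le`. -/
def LamRel (le : Fin n → Fin n → Prop) (i : Fin n) : Finset (Fin n) :=
  Finset.univ.filter (fun j => le j i)

/-- The descent set of a forest order given by the relation `le`:
elements `i` whose parent (the element covering `i`) is smaller than `i`. -/
def DesRel (le : Fin n → Fin n → Prop) : Finset (Fin n) :=
  Finset.univ.filter (fun i => ∃ j : Fin n, CovRel le i j ∧ j < i)

/-- `Des(M) = Des(F_M)`. -/
def DesM (P : PartialOrder (Fin n)) (M : Finset (ConnIdeal P)) : Finset (Fin n) :=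
  DesRel (FMle P M)

/-- `Des(M_r, M)`. -/
def DesMr (P : PartialOrder (Fin n)) (Mr M : Finset (ConnIdeal P)) : Finset (Fin n) :=
  (DesM P M).filter (fun i => ∃ J ∈ Mr, J.1 \ mu P M J.1 = {i})

/-- `Des̄(M_r, M)`. -/
def DesBarMr (P : PartialOrder (Fin n)) (Mr M : Finset (ConnIdeal P)) :
    Finset (ConnIdeal P) :=
  Mr.filter (fun J => ∃ i ∈ DesMr P Mr M, J.1 \ mu P M J.1 = {i})

/-- The relation `le` is (the order relation of) a `P`-forest: a partial order
whose Hasse diagram is a forest, all of whose principal order ideals are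
connected order ideals of `P`, and such that for incomparable `i, j` the union
`Λ_i ∪ Λ_j` is a disconnected order ideal of `P`. -/
structure IsPForestRel (P : PartialOrder (Fin n)) (le : Fin n → Fin n → Prop) : Prop where
  refl : ∀ i, le i i
  trans : ∀ i j k, le i j → le j k → le i k
  antisymm : ∀ i j, le i j → le j i → i = j
  forest : ∀ i j k, CovRel le i j → CovRel le i k → j = k
  connIdeal : ∀ i, IsConnIdeal P (LamRel le i)
  disc : ∀ i j : Fin n, ¬ le i j → ¬ le j i →
    IsIdeal P (LamRel le i ∪ LamRel le j) ∧ ¬ JConn P (LamRel le i ∪ LamRel le j)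

/-- The principal order ideal `Λ_i^P` of `P`. -/
def PIdeal (P : PartialOrder (Fin n)) (i : Fin n) : Finset (Fin n) :=
  Finset.univ.filter (fun k => P.le k i)

/-- The generating set `gs(J)`: the maximal elements of `J` with respect to `P`. -/
def gsJ (P : PartialOrder (Fin n)) (J : Finset (Fin n)) : Finset (Fin n) :=
  J.filter (fun i => ∀ j ∈ J, ¬ P.lt i j)

/-- `P` is naturally labeled. -/
def NatLabeled (P : PartialOrder (Fin n)) : Prop :=
  ∀ i j : Fin n, P.lt i j → i < j

/-- `U_max(M, J)`: the maximal members of `U(M,J) = {J' ∈ M : J' ⊊ J}`. -/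
def Umax (P : PartialOrder (Fin n)) (M : Finset (ConnIdeal P)) (J : Finset (Fin n)) :
    Finset (ConnIdeal P) :=
  (M.filter (fun Ja => Ja.1 ⊂ J)).filter
    (fun Ja => ∀ Jb ∈ M, Jb.1 ⊂ J → Jb ≠ Ja → ¬ Ja.1 ⊂ Jb.1)

/-- The set of vertices of `G_P` which are principal order ideals of `P`. -/
def PIdealSet (P : PartialOrder (Fin n)) : Set (ConnIdeal P) :=
  {A : ConnIdeal P | ∃ i : Fin n, A.1 = PIdeal P i}

/-- The graph `H_P`: the subgraph of `G_P` induced by the principal order ideals. -/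
def HP (P : PartialOrder (Fin n)) : SimpleGraph (PIdealSet P) :=
  (GP P).induce (PIdealSet P)

/-- `f` is a `P`-partition. -/
def IsPPartition (P : PartialOrder (Fin n)) (f : Fin n → ℕ) : Prop :=
  (∀ i j : Fin n, P.lt i j → f j ≤ f i) ∧
  (∀ i j : Fin n, P.lt i j → j < i → f j < f i)

/-- The monomial `∏_{k ∈ J} x_k`. -/
def xJ (J : Finset (Fin n)) : MvPowerSeries (Fin n) ℚ :=
  ∏ k ∈ J, MvPowerSeries.X k

/-- The set of linear extensions of `P`, viewed as permutations `w` of `Fin n`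
(in positions `0, …, n-1`) such that `i < j` whenever `w i <_P w j`. -/
def LinExts (P : PartialOrder (Fin n)) : Finset (Equiv.Perm (Fin n)) :=
  Finset.univ.filter (fun w => ∀ i j : Fin n, P.lt (w i) (w j) → i < j)

/-- The major index of a permutation (with 1-indexed positions). -/
def maj (w : Equiv.Perm (Fin n)) : ℕ :=
  ∑ i ∈ Finset.univ.filter
      (fun i : Fin n => ∃ h : (i : ℕ) + 1 < n, w ⟨(i : ℕ) + 1, h⟩ < w i),
    ((i : ℕ) + 1)

/-- The finset of maximum independent sets of the connected component `c` of `G_P`. -/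
def MaxIndepsOn (P : PartialOrder (Fin n)) (c : (GP P).ConnectedComponent) :
    Finset (Finset (ConnIdeal P)) :=
  Finset.univ.filter (fun Mr : Finset (ConnIdeal P) => IsMaxIndepOn (GP P) c.supp Mr)

/-!
Two maximal elements of `J` with a common lower bound give principal ideals that meet, and
neither contains the other, so they are adjacent in `G_P`. Sending each `x ∈ J` to the principal
ideal of a maximal element above it therefore turns comparable pairs of `J` into reachable
vertices of `χ_J`; since a maximal element is sent to its own principal ideal, every vertex of
`χ_J` is hit, and paths in the connected ideal `J` become walks through all of `χ_J`.
-/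

theorem SimpleGraph.Preconnected.of_surjective_of_adj_reachable {V W : Type*}
    {G : SimpleGraph V} {H : SimpleGraph W} (f : V → W) (hf : Function.Surjective f)
    (hadj : ∀ u v, G.Adj u v → H.Reachable (f u) (f v)) (hG : G.Preconnected) :
    H.Preconnected := by
  have hadj' : G.Adj ≤ (Function.onFun (Relation.ReflTransGen H.Adj) f) :=
    fun u v huv => (H.reachable_iff_reflTransGen _ _).1 (hadj u v huv)
  refine hf.forall₂.2 fun u v => (H.reachable_iff_reflTransGen _ _).2 ?_
  exact Relation.ReflTransGen.lift' f hadj' u v ((G.reachable_iff_reflTransGen u v).1 (hG u v))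

section

variable (P : PartialOrder (Fin n)) (J : Finset (Fin n))

theorem exists_mem_gsJ_le {x : Fin n} (hx : x ∈ J) : ∃ m ∈ gsJ P J, P.le x m := by
  obtain ⟨m, hxm, hm⟩ := @Finset.exists_le_maximal _ P.toPreorder _ _ hx
  refine ⟨m, mem_filter.2 ⟨hm.1, fun y hy hmy => ?_⟩, hxm⟩
  obtain ⟨hle, hnge⟩ := (P.lt_iff_le_not_ge m y).1 hmy
  exact hnge (hm.2 hy hle)

variable {P J}

theorem mem_of_mem_gsJ {a : Fin n} (ha : a ∈ gsJ P J) : a ∈ J :=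
  (mem_filter.1 ha).1

theorem eq_of_mem_gsJ_of_le {a b : Fin n} (ha : a ∈ gsJ P J) (hb : b ∈ J) (hab : P.le a b) :
    a = b := by
  by_contra hne
  exact (mem_filter.1 ha).2 b hb (@lt_of_le_of_ne _ P _ _ hab hne)

@[simp]
theorem mem_PIdeal {i k : Fin n} : k ∈ PIdeal P i ↔ P.le k i := by
  simp [PIdeal]

theorem PIdeal_subset_PIdeal_iff {i j : Fin n} : PIdeal P i ⊆ PIdeal P j ↔ P.le i j :=
  ⟨fun h => mem_PIdeal.1 (h (mem_PIdeal.2 (P.le_refl i))),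
    fun hij _ hk => mem_PIdeal.2 (P.le_trans _ _ _ (mem_PIdeal.1 hk) hij)⟩

variable (P) in
theorem isConnIdeal_PIdeal (i : Fin n) : IsConnIdeal P (PIdeal P i) := by
  refine ⟨fun k hk j hjk => mem_PIdeal.2 (P.le_trans _ _ _ hjk (mem_PIdeal.1 hk)), ?_⟩
  have hi : i ∈ (↑(PIdeal P i) : Set (Fin n)) := mem_PIdeal.2 (P.le_refl i)
  have toTop : ∀ a : (↑(PIdeal P i) : Set (Fin n)),
      ((compGraph P).induce (↑(PIdeal P i) : Set (Fin n))).Reachable a ⟨i, hi⟩ := by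
    intro a
    by_cases hai : a.1 = i
    · rw [show a = ⟨i, hi⟩ from Subtype.ext hai]
    · exact SimpleGraph.Adj.reachable ⟨hai, Or.inl (mem_PIdeal.1 a.2)⟩
  exact (SimpleGraph.connected_iff _).2 ⟨fun a b => (toTop a).trans (toTop b).symm, ⟨⟨i, hi⟩⟩⟩

theorem nontriv_PIdeal_of_le_of_le {a b x : Fin n} (ha : a ∈ gsJ P J) (hb : b ∈ gsJ P J)
    (hab : a ≠ b) (hxa : P.le x a) (hxb : P.le x b) : Nontriv (PIdeal P a) (PIdeal P b) := by
  refine ⟨⟨x, mem_inter.2 ⟨mem_PIdeal.2 hxa, mem_PIdeal.2 hxb⟩⟩, fun h => ?_, fun h => ?_⟩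
  · exact hab (eq_of_mem_gsJ_of_le ha (mem_of_mem_gsJ hb) (PIdeal_subset_PIdeal_iff.1 h))
  · exact hab (eq_of_mem_gsJ_of_le hb (mem_of_mem_gsJ ha) (PIdeal_subset_PIdeal_iff.1 h)).symm

variable (P J)

/-- The vertex set of `χ_J`. -/
def gsVertices : Set (ConnIdeal P) := {A : ConnIdeal P | ∃ i ∈ gsJ P J, A.1 = PIdeal P i}

def gsVertex {i : Fin n} (hi : i ∈ gsJ P J) : gsVertices P J :=
  ⟨⟨PIdeal P i, isConnIdeal_PIdeal P i⟩, ⟨i, hi, rfl⟩⟩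

variable {P J}

theorem reachable_gsVertex_of_le_of_le {a b x : Fin n} (ha : a ∈ gsJ P J) (hb : b ∈ gsJ P J)
    (hxa : P.le x a) (hxb : P.le x b) :
    ((GP P).induce (gsVertices P J)).Reachable (gsVertex P J ha) (gsVertex P J hb) := by
  by_cases hab : a = b
  · subst hab; rfl
  · exact SimpleGraph.Adj.reachable (nontriv_PIdeal_of_le_of_le ha hb hab hxa hxb)

end

/-- Lemma 3.1: for any connected order ideal `J` of `P`, the
subgraph `χ_J` of `G_P` induced by the vertex set `{Λ_i^P : i ∈ gs(J)}` is
connected. -/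
theorem statement_9 (n : ℕ) (P : PartialOrder (Fin n))
    (J : Finset (Fin n)) (hJ : IsConnIdeal P J) :
    ((GP P).induce {A : ConnIdeal P | ∃ i ∈ gsJ P J, A.1 = PIdeal P i}).Connected := by
  choose top htop hle using fun x : (↑J : Set (Fin n)) => exists_mem_gsJ_le P J x.2
  let f : (↑J : Set (Fin n)) → gsVertices P J := fun x => gsVertex P J (htop x)
  have hf : Function.Surjective f := by
    rintro ⟨A, i, hi, hA⟩
    let x : (↑J : Set (Fin n)) := ⟨i, mem_of_mem_gsJ hi⟩
    have hx : i = top x := eq_of_mem_gsJ_of_le hi (mem_of_mem_gsJ (htop x)) (hle x)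
    exact ⟨x, Subtype.ext (Subtype.ext (by simp only [f, gsVertex, hA, ← hx]))⟩
  have hadj : ∀ x y, ((compGraph P).induce (↑J : Set (Fin n))).Adj x y →
      ((GP P).induce (gsVertices P J)).Reachable (f x) (f y) := by
    rintro x y ⟨-, hxy | hyx⟩
    · exact reachable_gsVertex_of_le_of_le _ _ (hle x) (P.le_trans _ _ _ hxy (hle y))
    · exact reachable_gsVertex_of_le_of_le _ _ (P.le_trans _ _ _ hyx (hle x)) (hle y)
  exact (SimpleGraph.connected_iff _).2
    ⟨hJ.2.preconnected.of_surjective_of_adj_reachable f hf hadj, hJ.2.nonempty.map f⟩
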